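/- Let k ≥ 2, r > 0 and p_0 ∈ (0,1]. If liminf_{n→∞} P[F_k(n,⌊rn⌋) is p_0-satisfiable] > 0, then for every constant p < p_0 one has lim_{n→∞} P[F_k(n,⌊rn⌋) is p-satisfiable] = 1. -/

import Mathlib

open Finset Filter Real

noncomputable section

abbrev Formula (n k m : ℕ) := Fin m → Fin k → Fin n × Bool

def clauseSat {n k : ℕ} (σ : Fin n → Bool) (c : Fin k → Fin n × Bool) : Prop :=
  ∃ j : Fin k, σ (c j).1 = (c j).2

instance {n k : ℕ} (σ : Fin n → Bool) (c : Fin k → Fin n × Bool) :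
    Decidable (clauseSat σ c) := by unfold clauseSat; infer_instance

def numSat {n k m : ℕ} (σ : Fin n → Bool) (F : Formula n k m) : ℕ :=
  (Finset.univ.filter fun i => clauseSat σ (F i)).card

def pSatisfiable (n k m : ℕ) (p : ℝ) (F : Formula n k m) : Prop :=
  ∃ σ : Fin n → Bool,
    (1 - (2:ℝ)^(-(k:ℤ)) + p * (2:ℝ)^(-(k:ℤ))) * m ≤ (numSat σ F : ℝ)

open Classical in
def prob {β : Type*} [Fintype β] (P : β → Prop) : ℝ :=
  ((Finset.univ.filter P).card : ℝ) / (Fintype.card β)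

noncomputable section

namespace Booster

variable {Ω : Type*} [Fintype Ω] [Nonempty Ω]

def avg (f : Ω → ℝ) : ℝ := (∑ x, f x) / Fintype.card Ω

def Vr (f : Ω → ℝ) : ℝ := avg (fun x => (f x - avg f) ^ 2)

lemma card_pos' (Ω : Type*) [Fintype Ω] [Nonempty Ω] : (0:ℝ) < Fintype.card Ω := by
  exact_mod_cast Fintype.card_pos

lemma avg_mono {f g : Ω → ℝ} (h : ∀ x, f x ≤ g x) : avg f ≤ avg g := by
  unfold avg
  gcongr
  exact h _

lemma avg_const (c : ℝ) : avg (fun _ : Ω => c) = c := by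
  rw [avg]
  rw [Finset.sum_const, nsmul_eq_mul]
  field_simp
  rw [Finset.card_univ, mul_comm]

lemma avg_add (f g : Ω → ℝ) : avg (fun x => f x + g x) = avg f + avg g := by
  simp [avg, Finset.sum_add_distrib, add_div]

lemma avg_smul (c : ℝ) (f : Ω → ℝ) : avg (fun x => c * f x) = c * avg f := by
  simp [avg, ← Finset.mul_sum, mul_div_assoc]

lemma avg_sub (f g : Ω → ℝ) : avg (fun x => f x - g x) = avg f - avg g := by
  have := avg_add f (fun x => -g x)
  have h2 : avg (fun x => -g x) = -avg g := by
    have := avg_smul (-1) g; simpa using this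
  simp only [← sub_eq_add_neg] at this
  rw [this, h2, sub_eq_add_neg]

lemma abs_avg_le (f : Ω → ℝ) : |avg f| ≤ avg (fun x => |f x|) := by
  have h1 : |(∑ x, f x)| ≤ ∑ x, |f x| := Finset.abs_sum_le_sum_abs _ _
  rw [avg, avg, abs_div, abs_of_nonneg (le_of_lt (card_pos' Ω))]
  gcongr

lemma avg_le_of_le {f : Ω → ℝ} {c : ℝ} (h : ∀ x, f x ≤ c) : avg f ≤ c := by
  have := avg_mono (g := fun _ => c) h
  rwa [avg_const] at this

lemma Vr_nonneg (f : Ω → ℝ) : 0 ≤ Vr f := by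
  have : avg (fun _ : Ω => (0:ℝ)) ≤ avg (fun x => (f x - avg f)^2) :=
    avg_mono fun x => sq_nonneg _
  rwa [avg_const] at this

/-- Chebyshev. -/
lemma chebyshev (f : Ω → ℝ) {t : ℝ} (ht : 0 < t) :
    prob (fun x : Ω => t ≤ |f x - avg f|) ≤ Vr f / t ^ 2 := by
  classical
  set μ := avg f
  set s := Finset.univ.filter (fun x : Ω => t ≤ |f x - μ|) with hs
  have hsum : t ^ 2 * s.card ≤ ∑ x, (f x - μ) ^ 2 := by
    calc t ^ 2 * s.card = ∑ _x ∈ s, t ^ 2 := by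
          rw [Finset.sum_const, nsmul_eq_mul, mul_comm]
      _ ≤ ∑ x ∈ s, (f x - μ) ^ 2 := by
          refine Finset.sum_le_sum fun x hx => ?_
          have := (Finset.mem_filter.mp hx).2
          have h2 : t ^ 2 ≤ |f x - μ| ^ 2 := by
            exact pow_le_pow_left₀ ht.le this 2
          simpa [sq_abs] using h2
      _ ≤ ∑ x, (f x - μ) ^ 2 :=
          Finset.sum_le_sum_of_subset_of_nonneg (Finset.filter_subset _ _)
            (fun x _ _ => sq_nonneg _)
  have hVr : ∑ x, (f x - μ) ^ 2 = Vr f * Fintype.card Ω := by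
    rw [Vr, avg, div_mul_cancel₀]
    exact (card_pos' Ω).ne'
  have hprob : prob (fun x : Ω => t ≤ |f x - μ|) = (s.card : ℝ) / Fintype.card Ω := by
    rw [prob]
  rw [hprob, div_le_div_iff₀ (card_pos' Ω) (by positivity)]
  rw [hVr] at hsum
  nlinarith [hsum]
lemma avg_prod {α β : Type*} [Fintype α] [Fintype β] [Nonempty α] [Nonempty β]
    (f : α × β → ℝ) :
    avg f = avg (fun u : β => avg (fun a : α => f (a, u))) := by
  unfold avg
  rw [Fintype.sum_prod_type_right, Fintype.card_prod, ← Finset.sum_div, div_div]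
  push_cast
  ring_nf

lemma var_prod_step {α β : Type*} [Fintype α] [Fintype β] [Nonempty α] [Nonempty β]
    (f : α × β → ℝ) (h : ∀ a b u, |f (a, u) - f (b, u)| ≤ 1) :
    Vr f ≤ Vr (fun u : β => avg (fun a : α => f (a, u))) + 1 := by
  set g : β → ℝ := fun u => avg (fun a : α => f (a, u)) with hg
  set μ := avg f with hμ
  have hμg : μ = avg g := avg_prod f
  have hfg : ∀ a u, |f (a, u) - g u| ≤ 1 := by
    intro a u
    have : f (a, u) - g u = avg (fun b : α => f (a, u) - f (b, u)) := by
      rw [avg_sub, avg_const]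
    rw [this]
    exact (abs_avg_le _).trans (avg_le_of_le fun b => h a b u)
  have key : ∀ u : β, avg (fun a : α => (f (a, u) - μ) ^ 2)
      = avg (fun a : α => (f (a, u) - g u) ^ 2) + (g u - μ) ^ 2 := by
    intro u
    have expand : ∀ a : α, (f (a, u) - μ) ^ 2
        = (f (a, u) - g u) ^ 2 + (2 * (g u - μ)) * (f (a, u) - g u) + (g u - μ) ^ 2 := by
      intro a; ring
    calc avg (fun a : α => (f (a, u) - μ) ^ 2)
        = avg (fun a : α => (f (a, u) - g u) ^ 2 + (2 * (g u - μ)) * (f (a, u) - g u))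
          + (g u - μ) ^ 2 := by
          rw [← avg_const (Ω := α) ((g u - μ) ^ 2), ← avg_add]
          congr 1; ext a; rw [expand a]
      _ = avg (fun a : α => (f (a, u) - g u) ^ 2)
          + (2 * (g u - μ)) * avg (fun a : α => f (a, u) - g u) + (g u - μ) ^ 2 := by
          rw [avg_add, avg_smul]
      _ = _ := by
          rw [avg_sub, avg_const]
          have hgu : avg (fun a : α => f (a, u)) = g u := rfl
          rw [hgu]
          ring
  have : Vr f = avg (fun u : β => avg (fun a : α => (f (a, u) - μ) ^ 2)) := by
    rw [Vr, ← hμ]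
    exact avg_prod _
  rw [this]
  have hb : ∀ u : β, avg (fun a : α => (f (a, u) - μ) ^ 2) ≤ 1 + (g u - μ) ^ 2 := by
    intro u
    rw [key u]
    have : avg (fun a : α => (f (a, u) - g u) ^ 2) ≤ 1 := by
      apply avg_le_of_le
      intro a
      have := hfg a u
      nlinarith [abs_nonneg (f (a,u) - g u), sq_abs (f (a,u) - g u)]
    linarith
  calc avg (fun u : β => avg (fun a : α => (f (a, u) - μ) ^ 2))
      ≤ avg (fun u : β => 1 + (g u - μ) ^ 2) := avg_mono hb
    _ = 1 + Vr g := by rw [avg_add, avg_const, Vr, ← hμg]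
    _ = Vr g + 1 := by ring

lemma avg_equiv {Ω Ω' : Type*} [Fintype Ω] [Nonempty Ω] [Fintype Ω'] [Nonempty Ω']
    (e : Ω' ≃ Ω) (f : Ω → ℝ) : avg (fun x => f (e x)) = avg f := by
  unfold avg
  rw [Equiv.sum_comp e f, Fintype.card_congr e]

lemma vr_equiv {Ω Ω' : Type*} [Fintype Ω] [Nonempty Ω] [Fintype Ω'] [Nonempty Ω']
    (e : Ω' ≃ Ω) (f : Ω → ℝ) : Vr (fun x => f (e x)) = Vr f := by
  unfold Vr
  rw [avg_equiv e f, ← avg_equiv e (fun x => (f x - avg f) ^ 2)]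

lemma var_pi {α : Type*} [Fintype α] [Nonempty α] :
    ∀ (m : ℕ) (f : (Fin m → α) → ℝ),
      (∀ (i : Fin m) (x y : Fin m → α), (∀ j, j ≠ i → x j = y j) → |f x - f y| ≤ 1) →
      Vr f ≤ m := by
  intro m
  induction m with
  | zero =>
      intro f _
      have huniq : ∀ x : Fin 0 → α, x = default := fun x => Subsingleton.elim _ _
      have havg : avg f = f default := by
        unfold avg
        rw [Fintype.sum_unique f, Fintype.card_unique]
        simp
      have : Vr f = 0 := by
        rw [Vr, havg]
        have h0 : (fun x : Fin 0 → α => (f x - f default) ^ 2) = fun _ => 0 := by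
          funext x; rw [huniq x]; ring
        rw [h0, avg_const]
      simp [this]
  | succ m ih =>
      intro f hf
      let e : α × (Fin m → α) ≃ (Fin (m+1) → α) := Fin.consEquiv (fun _ => α)
      have he : ∀ (a : α) (u : Fin m → α), e (a, u) = Fin.cons a u := fun a u => rfl
      set F : α × (Fin m → α) → ℝ := fun p => f (e p) with hF
      have hVr : Vr F = Vr f := vr_equiv e f
      have hF1 : ∀ a b u, |F (a, u) - F (b, u)| ≤ 1 := by
        intro a b u
        apply hf 0
        intro j hj
        rw [he, he]
        rcases Fin.eq_zero_or_eq_succ j with rfl | ⟨j', rfl⟩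
        · exact absurd rfl hj
        · rw [Fin.cons_succ, Fin.cons_succ]
      have hg : ∀ (i : Fin m) (x y : Fin m → α), (∀ j, j ≠ i → x j = y j) →
          |avg (fun a : α => F (a, x)) - avg (fun a : α => F (a, y))| ≤ 1 := by
        intro i x y hxy
        rw [← avg_sub]
        refine (abs_avg_le _).trans (avg_le_of_le fun a => ?_)
        apply hf i.succ
        intro j hj
        rw [he, he]
        rcases Fin.eq_zero_or_eq_succ j with rfl | ⟨j', rfl⟩
        · rw [Fin.cons_zero, Fin.cons_zero]
        · rw [Fin.cons_succ, Fin.cons_succ]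
          exact hxy j' (fun hh => hj (by rw [hh]))
      calc Vr f = Vr F := hVr.symm
        _ ≤ Vr (fun u => avg (fun a : α => F (a, u))) + 1 := var_prod_step F hF1
        _ ≤ m + 1 := by
            have := ih (fun u => avg (fun a : α => F (a, u))) hg
            linarith
        _ = (m + 1 : ℕ) := by push_cast; ring
/-! ### prob lemmas -/

lemma prob_nonneg {β : Type*} [Fintype β] (P : β → Prop) : 0 ≤ prob P := by
  unfold prob; positivity

lemma prob_le_one {β : Type*} [Fintype β] (P : β → Prop) : prob P ≤ 1 := by
  classical
  unfold prob
  rcases isEmpty_or_nonempty β with h | h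
  · simp [Fintype.card_eq_zero]
  · rw [div_le_one (card_pos' β)]
    have h2 : (Finset.univ.filter P).card ≤ Fintype.card β := by
      rw [← Finset.card_univ]
      exact Finset.card_le_card (Finset.filter_subset _ _)
    exact_mod_cast h2

lemma prob_mono {β : Type*} [Fintype β] {P Q : β → Prop} (h : ∀ x, P x → Q x) :
    prob P ≤ prob Q := by
  classical
  unfold prob
  gcongr
  exact h _

lemma prob_congr {β : Type*} [Fintype β] {P Q : β → Prop} (h : ∀ x, P x ↔ Q x) :
    prob P = prob Q := by
  have : P = Q := funext fun x => propext (h x)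
  rw [this]

lemma prob_compl {β : Type*} [Fintype β] [Nonempty β] (P : β → Prop) :
    prob (fun x => ¬ P x) = 1 - prob P := by
  classical
  unfold prob
  rw [eq_sub_iff_add_eq, ← add_div, div_eq_one_iff_eq (ne_of_gt (card_pos' β)),
    ← Finset.card_univ (α := β)]
  norm_cast
  rw [add_comm]
  convert Finset.card_filter_add_card_filter_not (p := P) using 3
  rw [Finset.filter_congr_decidable, Finset.filter_congr_decidable]

/-! ### maxSat -/

def maxSat {n k m : ℕ} (F : Formula n k m) : ℕ :=
  Finset.univ.sup (fun σ : Fin n → Bool => numSat σ F)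

lemma pSat_iff {n k m : ℕ} (p : ℝ) (F : Formula n k m) :
    pSatisfiable n k m p F ↔
      (1 - (2:ℝ)^(-(k:ℤ)) + p * (2:ℝ)^(-(k:ℤ))) * m ≤ (maxSat F : ℝ) := by
  constructor
  · rintro ⟨σ, hσ⟩
    refine hσ.trans ?_
    exact_mod_cast Finset.le_sup (f := fun σ : Fin n → Bool => numSat σ F)
      (Finset.mem_univ σ)
  · intro h
    obtain ⟨σ, -, hσ⟩ := Finset.exists_mem_eq_sup Finset.univ Finset.univ_nonempty
      (fun σ : Fin n → Bool => numSat σ F)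
    exact ⟨σ, by rw [← hσ]; exact h⟩

lemma numSat_lipschitz {n k m : ℕ} (σ : Fin n → Bool) (F G : Formula n k m) (i : Fin m)
    (h : ∀ j, j ≠ i → F j = G j) : numSat σ F ≤ numSat σ G + 1 := by
  classical
  unfold numSat
  have hsub : Finset.univ.filter (fun j => clauseSat σ (F j))
      ⊆ insert i (Finset.univ.filter (fun j => clauseSat σ (G j))) := by
    intro j hj
    rcases eq_or_ne j i with rfl | hne
    · exact Finset.mem_insert_self _ _
    · apply Finset.mem_insert_of_mem
      simp only [Finset.mem_filter, Finset.mem_univ, true_and] at hj ⊢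
      rwa [← h j hne]
  calc (Finset.univ.filter fun j => clauseSat σ (F j)).card
      ≤ (insert i (Finset.univ.filter fun j => clauseSat σ (G j))).card :=
        Finset.card_le_card hsub
    _ ≤ _ := Finset.card_insert_le _ _

lemma maxSat_lipschitz {n k m : ℕ} (F G : Formula n k m) (i : Fin m)
    (h : ∀ j, j ≠ i → F j = G j) : maxSat F ≤ maxSat G + 1 := by
  unfold maxSat
  apply Finset.sup_le
  intro σ _
  exact (numSat_lipschitz σ F G i h).trans
    (add_le_add_left (Finset.le_sup (f := fun σ : Fin n → Bool => numSat σ G)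
      (Finset.mem_univ σ)) 1)
lemma core (n k m : ℕ) (hn : 0 < n) (hm : 0 < m) (p p₀ c : ℝ) (hpp : p < p₀) (hc : 0 < c)
    (hsmall : 4 / (((p₀ - p) * (2:ℝ)^(-(k:ℤ))) ^ 2 * m) < c)
    (hprob : c < prob (pSatisfiable n k m p₀)) :
    1 - 4 / (((p₀ - p) * (2:ℝ)^(-(k:ℤ))) ^ 2 * m) ≤ prob (pSatisfiable n k m p) := by
  set δ : ℝ := (p₀ - p) * (2:ℝ)^(-(k:ℤ)) with hδdef
  have h2k : (0:ℝ) < (2:ℝ)^(-(k:ℤ)) := zpow_pos (by norm_num) _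
  have hδ : 0 < δ := mul_pos (by linarith) h2k
  have hmR : (0:ℝ) < m := by exact_mod_cast hm
  haveI : Nonempty (Fin n × Bool) := ⟨(⟨0, hn⟩, true)⟩
  set f : Formula n k m → ℝ := fun F => (maxSat F : ℝ) with hf
  have hlip : ∀ (i : Fin m) (x y : Formula n k m), (∀ j, j ≠ i → x j = y j) →
      |f x - f y| ≤ 1 := by
    intro i x y hxy
    rw [abs_sub_le_iff]
    constructor
    · have h1 := maxSat_lipschitz x y i hxy
      have h2 := (Nat.cast_le (α := ℝ)).mpr h1
      push_cast at h2
      simp only [hf]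
      linarith
    · have h1 := maxSat_lipschitz y x i (fun j hj => (hxy j hj).symm)
      have h2 := (Nat.cast_le (α := ℝ)).mpr h1
      push_cast at h2
      simp only [hf]
      linarith
  have hVar : Vr f ≤ m := var_pi m f hlip
  set μ := avg f with hμ
  set s : ℝ := δ * m / 2 with hsdef
  have hs : 0 < s := by positivity
  have cheb2 : prob (fun F : Formula n k m => s ≤ |f F - μ|) ≤ 4 / (δ ^ 2 * m) := by
    refine (chebyshev f hs).trans ?_
    have h1 : Vr f / s ^ 2 ≤ (m:ℝ) / s ^ 2 := by gcongr
    refine h1.trans (le_of_eq ?_)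
    rw [hsdef]
    field_simp
    ring
  set t₀ : ℝ := (1 - (2:ℝ)^(-(k:ℤ)) + p₀ * (2:ℝ)^(-(k:ℤ))) * m with ht₀
  set tp : ℝ := (1 - (2:ℝ)^(-(k:ℤ)) + p * (2:ℝ)^(-(k:ℤ))) * m with htp
  have hts : t₀ - tp = δ * m := by rw [ht₀, htp, hδdef]; ring
  have hps : prob (pSatisfiable n k m p₀) = prob (fun F : Formula n k m => t₀ ≤ f F) :=
    prob_congr fun F => pSat_iff p₀ F
  have hμlb : t₀ - s ≤ μ := by
    by_contra hcon
    push_neg at hcon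
    have hsub : ∀ F : Formula n k m, t₀ ≤ f F → s ≤ |f F - μ| := by
      intro F hF
      have : s ≤ f F - μ := by linarith
      exact this.trans (le_abs_self _)
    have : prob (pSatisfiable n k m p₀) ≤ 4 / (δ ^ 2 * m) := by
      rw [hps]
      exact (prob_mono hsub).trans cheb2
    linarith
  have hsub2 : ∀ F : Formula n k m, ¬ pSatisfiable n k m p F → s ≤ |f F - μ| := by
    intro F hF
    rw [pSat_iff p F] at hF
    push_neg at hF
    have h2 : f F < tp := hF
    have h3 : s ≤ μ - f F := by
      have : δ * m = 2 * s := by rw [hsdef]; ring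
      linarith
    calc s ≤ μ - f F := h3
      _ ≤ |f F - μ| := by rw [abs_sub_comm]; exact le_abs_self _
  have hfinal := (prob_mono hsub2).trans cheb2
  rw [prob_compl (pSatisfiable n k m p)] at hfinal
  linarith
end Booster

open Booster in
/-- Corollary 1 (booster): if `F_k(n,⌊rn⌋)` is `p₀`-satisfiable with uniformly
positive probability, then for every constant `p < p₀`, `F_k(n,⌊rn⌋)` is
`p`-satisfiable w.h.p. -/
theorem booster (k : ℕ) (hk : 2 ≤ k) (r : ℝ) (hr : 0 < r) (p₀ : ℝ)
    (hp₀ : 0 < p₀) (hp₀1 : p₀ ≤ 1)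
    (hpos : 0 < Filter.liminf (fun n : ℕ => prob (pSatisfiable n k ⌊r * n⌋₊ p₀)) atTop) :
    ∀ p : ℝ, p < p₀ →
      Tendsto (fun n : ℕ => prob (pSatisfiable n k ⌊r * n⌋₊ p)) atTop (nhds 1) := by
  intro p hp
  have h2k : (0:ℝ) < (2:ℝ)^(-(k:ℤ)) := zpow_pos (by norm_num) _
  set δ : ℝ := (p₀ - p) * (2:ℝ)^(-(k:ℤ)) with hδdef
  have hδ : 0 < δ := mul_pos (by linarith) h2k
  set L := Filter.liminf (fun n : ℕ => prob (pSatisfiable n k ⌊r * n⌋₊ p₀)) atTop with hLdef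
  have hbdd : IsBoundedUnder (· ≥ ·) atTop
      (fun n : ℕ => prob (pSatisfiable n k ⌊r * n⌋₊ p₀)) :=
    isBoundedUnder_of ⟨0, fun n => prob_nonneg _⟩
  have hev1 : ∀ᶠ n in atTop, L / 2 < prob (pSatisfiable n k ⌊r * n⌋₊ p₀) :=
    eventually_lt_of_lt_liminf (by linarith) hbdd
  have hm : Tendsto (fun n : ℕ => (⌊r * n⌋₊ : ℕ)) atTop atTop :=
    tendsto_nat_floor_atTop.comp (Tendsto.const_mul_atTop hr tendsto_natCast_atTop_atTop)
  have hz : Tendsto (fun n : ℕ => 4 / (δ ^ 2 * (⌊r * n⌋₊ : ℝ))) atTop (nhds 0) := by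
    apply Tendsto.div_atTop tendsto_const_nhds
    exact Tendsto.const_mul_atTop (by positivity) (tendsto_natCast_atTop_atTop.comp hm)
  have hev2 : ∀ᶠ n : ℕ in atTop, 4 / (δ ^ 2 * (⌊r * n⌋₊ : ℝ)) < L / 2 :=
    hz.eventually_lt_const (by linarith)
  have hev3 : ∀ᶠ n : ℕ in atTop, 0 < ⌊r * (n:ℝ)⌋₊ := hm.eventually_gt_atTop 0
  have hev4 : ∀ᶠ n : ℕ in atTop, 0 < n := eventually_gt_atTop 0
  have key : ∀ᶠ n : ℕ in atTop,
      1 - 4 / (δ ^ 2 * (⌊r * n⌋₊ : ℝ)) ≤ prob (pSatisfiable n k ⌊r * n⌋₊ p) := by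
    filter_upwards [hev1, hev2, hev3, hev4] with n h1 h2 h3 h4
    exact core n k ⌊r * n⌋₊ h4 h3 p p₀ (L / 2) hp (by linarith) (by rw [← hδdef]; exact h2) h1
  have hone : Tendsto (fun n : ℕ => 1 - 4 / (δ ^ 2 * (⌊r * n⌋₊ : ℝ))) atTop (nhds 1) := by
    have := tendsto_const_nhds (x := (1:ℝ)) (f := atTop (α := ℕ)) |>.sub hz
    simpa using this
  exact tendsto_of_tendsto_of_tendsto_of_le_of_le' hone tendsto_const_nhds key
    (Filter.Eventually.of_forall fun n => prob_le_one _)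

end
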